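/- arXiv:2205.09275 — 4 statements merged into one kernel-verified Lean document; each statement's English description precedes it below -/
import Mathlib

section
/- For every real a ≥ 1 and every natural number n ≥ 2, the integral ∫₀^∞ dx / ((1+|x-a|)(1+x)^n) is bounded by C_n/(2+a), where C_n depends only on n. -/
open MeasureTheory Set Real

/-- Core algebraic inequality. -/
lemma core_ineq (n : ℕ) (hn : 2 ≤ n) (a u v : ℝ) (hu : 1 ≤ u) (hv : 1 ≤ v)
    (hcase : (2 + a) / 2 ≤ u ∨ (2 + a) / 2 ≤ v) :
    (2 + a) * u * v ^ 2 ≤ 2 * v ^ n * (u ^ 2 + v ^ 2) := by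
  have hu0 : (0:ℝ) < u := lt_of_lt_of_le one_pos hu
  have hv0 : (0:ℝ) < v := lt_of_lt_of_le one_pos hv
  rcases hcase with h | h
  · have h2 : v ^ 2 ≤ v ^ n := pow_le_pow_right₀ hv hn
    have h' : 2 + a ≤ 2 * u := by linarith
    calc (2 + a) * u * v ^ 2 = (2 + a) * (u * v ^ 2) := by ring
      _ ≤ (2 * u) * (u * v ^ 2) := mul_le_mul_of_nonneg_right h' (by positivity)
      _ = 2 * v ^ 2 * u ^ 2 := by ring
      _ ≤ 2 * v ^ n * u ^ 2 := by
          exact mul_le_mul_of_nonneg_right (by linarith) (sq_nonneg u)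
      _ ≤ 2 * v ^ n * (u ^ 2 + v ^ 2) := by
          have hvn : (0:ℝ) < v ^ n := pow_pos hv0 n
          nlinarith
  · have h3 : v ^ 3 ≤ v ^ (n + 1) := pow_le_pow_right₀ hv (by omega)
    have h' : 2 + a ≤ 2 * v := by linarith
    have key : v ^ n * (2 * u * v) ≤ v ^ n * (u ^ 2 + v ^ 2) := by
      have h4 : 2 * u * v ≤ u ^ 2 + v ^ 2 := by nlinarith [sq_nonneg (u - v)]
      exact mul_le_mul_of_nonneg_left h4 (pow_pos hv0 n).le
    calc (2 + a) * u * v ^ 2 = (2 + a) * (u * v ^ 2) := by ring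
      _ ≤ (2 * v) * (u * v ^ 2) := mul_le_mul_of_nonneg_right h' (by positivity)
      _ = 2 * (u * v ^ 3) := by ring
      _ ≤ 2 * (u * v ^ (n + 1)) := by
          have := mul_le_mul_of_nonneg_left h3 hu0.le
          linarith
      _ = v ^ n * (2 * u * v) := by ring
      _ ≤ v ^ n * (u ^ 2 + v ^ 2) := key
      _ ≤ 2 * v ^ n * (u ^ 2 + v ^ 2) := by
          have hvn : (0:ℝ) < v ^ n := pow_pos hv0 n
          nlinarith

lemma pointwise_bound (n : ℕ) (hn : 2 ≤ n) (a : ℝ) (ha : 1 ≤ a) {x : ℝ} (hx : 0 < x) :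
    1 / ((1 + |x - a|) * (1 + x) ^ n) ≤
      2 / (2 + a) * ((1 + x ^ 2)⁻¹ + (1 + (x - a) ^ 2)⁻¹) := by
  set u : ℝ := 1 + |x - a| with hu_def
  set v : ℝ := 1 + x with hv_def
  have hu : 1 ≤ u := by simp [hu_def, abs_nonneg]
  have hv : 1 ≤ v := by simp [hv_def, hx.le]
  have hu0 : (0:ℝ) < u := lt_of_lt_of_le one_pos hu
  have hv0 : (0:ℝ) < v := lt_of_lt_of_le one_pos hv
  have ha2 : (0:ℝ) < 2 + a := by linarith
  -- case analysis : either u or v is large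
  have hcase : (2 + a) / 2 ≤ u ∨ (2 + a) / 2 ≤ v := by
    rcases le_or_gt x (a / 2) with h | h
    · left
      have : a - x ≤ |x - a| := by
        rw [abs_sub_comm]; exact le_abs_self _
      simp only [hu_def]; linarith
    · right; simp only [hv_def]; linarith
  -- step 1: bound by 2/(2+a) * (1/v^2 + 1/u^2)
  have step1 : 1 / (u * v ^ n) ≤ 2 / (2 + a) * ((v ^ 2)⁻¹ + (u ^ 2)⁻¹) := by
    have hrw : 2 / (2 + a) * ((v ^ 2)⁻¹ + (u ^ 2)⁻¹)
        = (2 * (u ^ 2 + v ^ 2)) / ((2 + a) * (u ^ 2 * v ^ 2)) := by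
      field_simp
      try ring
      try tauto
    rw [hrw, div_le_div_iff₀ (by positivity) (by positivity)]
    have := core_ineq n hn a u v hu hv hcase
    calc 1 * ((2 + a) * (u ^ 2 * v ^ 2)) = ((2 + a) * u * v ^ 2) * u := by ring
      _ ≤ (2 * v ^ n * (u ^ 2 + v ^ 2)) * u := by
          exact mul_le_mul_of_nonneg_right this hu0.le
      _ = 2 * (u ^ 2 + v ^ 2) * (u * v ^ n) := by ring
  -- step 2: 1/v^2 ≤ 1/(1+x^2), 1/u^2 ≤ 1/(1+(x-a)^2)
  have h1 : (v ^ 2)⁻¹ ≤ (1 + x ^ 2)⁻¹ := by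
    apply inv_anti₀ (by positivity)
    simp only [hv_def]; nlinarith
  have h2 : (u ^ 2)⁻¹ ≤ (1 + (x - a) ^ 2)⁻¹ := by
    apply inv_anti₀ (by positivity)
    simp only [hu_def]
    have := abs_nonneg (x - a)
    have := sq_abs (x - a)
    nlinarith
  calc 1 / (u * v ^ n) ≤ 2 / (2 + a) * ((v ^ 2)⁻¹ + (u ^ 2)⁻¹) := step1
    _ ≤ 2 / (2 + a) * ((1 + x ^ 2)⁻¹ + (1 + (x - a) ^ 2)⁻¹) := by
        apply mul_le_mul_of_nonneg_left (by linarith) (by positivity)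

theorem integral_bound_n_ge_two (n : ℕ) (hn : 2 ≤ n) :
    ∃ C > 0, ∀ a : ℝ, 1 ≤ a →
      ∫ x in Ioi (0:ℝ), 1 / ((1 + |x - a|) * (1 + x) ^ n) ≤ C / (2 + a) := by
  refine ⟨4 * π, by positivity, fun a ha => ?_⟩
  have ha2 : (0:ℝ) < 2 + a := by linarith
  have hint1 : Integrable (fun x : ℝ => (1 + x ^ 2)⁻¹) := integrable_inv_one_add_sq
  have hint2 : Integrable (fun x : ℝ => (1 + (x - a) ^ 2)⁻¹) := hint1.comp_sub_right a
  set G : ℝ → ℝ := fun x => 2 / (2 + a) * ((1 + x ^ 2)⁻¹ + (1 + (x - a) ^ 2)⁻¹) with hG_def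
  have hGint : Integrable G := (hint1.add hint2).const_mul _
  have hmono : ∫ x in Ioi (0:ℝ), 1 / ((1 + |x - a|) * (1 + x) ^ n)
      ≤ ∫ x in Ioi (0:ℝ), G x := by
    apply integral_mono_of_nonneg
    · filter_upwards [ae_restrict_mem measurableSet_Ioi] with x hx
      have : (0:ℝ) < (1 + |x - a|) * (1 + x) ^ n := by
        have : (0:ℝ) < x := hx
        positivity
      positivity
    · exact hGint.integrableOn
    · filter_upwards [ae_restrict_mem measurableSet_Ioi] with x hx
      exact pointwise_bound n hn a ha hx
  refine hmono.trans ?_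
  have hI1 : ∫ x in Ioi (0:ℝ), (1 + x ^ 2)⁻¹ ≤ π := by
    calc ∫ x in Ioi (0:ℝ), (1 + x ^ 2)⁻¹ ≤ ∫ x : ℝ, (1 + x ^ 2)⁻¹ := by
          apply setIntegral_le_integral hint1
          filter_upwards with x; positivity
      _ = π := integral_univ_inv_one_add_sq
  have hI2 : ∫ x in Ioi (0:ℝ), (1 + (x - a) ^ 2)⁻¹ ≤ π := by
    calc ∫ x in Ioi (0:ℝ), (1 + (x - a) ^ 2)⁻¹ ≤ ∫ x : ℝ, (1 + (x - a) ^ 2)⁻¹ := by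
          apply setIntegral_le_integral hint2
          filter_upwards with x; positivity
      _ = ∫ x : ℝ, (1 + x ^ 2)⁻¹ := by
          exact integral_sub_right_eq_self (fun x : ℝ => (1 + x ^ 2)⁻¹) a
      _ = π := integral_univ_inv_one_add_sq
  have hsplit : ∫ x in Ioi (0:ℝ), G x
      = 2 / (2 + a) * ((∫ x in Ioi (0:ℝ), (1 + x ^ 2)⁻¹)
        + ∫ x in Ioi (0:ℝ), (1 + (x - a) ^ 2)⁻¹) := by
    simp only [hG_def]
    rw [integral_const_mul, integral_add hint1.integrableOn hint2.integrableOn]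
  rw [hsplit]
  have hπ : (0:ℝ) < π := pi_pos
  calc 2 / (2 + a) * ((∫ x in Ioi (0:ℝ), (1 + x ^ 2)⁻¹)
        + ∫ x in Ioi (0:ℝ), (1 + (x - a) ^ 2)⁻¹)
      ≤ 2 / (2 + a) * (π + π) := by
        apply mul_le_mul_of_nonneg_left (by linarith) (by positivity)
    _ = 4 * π / (2 + a) := by field_simp; ring
end

section
/- Let r ∈ (1,2) and q ∈ L²(ℝ₊,(1+x)^r dx). Then for every z ∈ ℂ, ω(q,z) := ∫₀^∞ |q(x)|/√(1+|x-z|) dx satisfies ω(q,z) ≤ C ‖q‖_{L²((1+x)^r dx)} · (log(2+|z|)/(2+|z|))^{1/2}, with C depending only on r. -/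
/-!
By Cauchy–Schwarz with the weight `(1 + x) ^ r`, the integral is at most `‖q‖` times the square root
of `∫ ((1 + |x - z|) (1 + x) ^ r)⁻¹`. Since `r ≥ 1` and `|x - z| ≥ |x - |z||`, that integral is
dominated by `∫₀^∞ (1 + x)⁻¹ (1 + |x - t|)⁻¹` with `t = |z|`. On `[0, 1 + 2t]` the two factors have
sum at least `2 + t`, so their product is at most `((1 + x)⁻¹ + (1 + |x - t|)⁻¹) / (2 + t)`, whose
integral is `O(log (2 + t) / (2 + t))`; beyond `1 + 2t` the integrand is at most `2 / x²`, and the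
tail contributes `O(1 / (1 + t))`.
-/

open MeasureTheory Set Real

lemma inv_mul_inv_le_inv_add_inv_div {a b s : ℝ} (ha : 0 < a) (hb : 0 < b) (hs : 0 < s)
    (h : s ≤ a + b) : a⁻¹ * b⁻¹ ≤ (a⁻¹ + b⁻¹) / s := by
  have key : a⁻¹ * b⁻¹ = (a⁻¹ + b⁻¹) / (a + b) := by field_simp; ring
  rw [key]
  gcongr

lemma intervalIntegrable_inv_one_add {M : ℝ} (hM : 0 ≤ M) :
    IntervalIntegrable (fun x : ℝ => (1 + x)⁻¹) volume 0 M :=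
  intervalIntegral.intervalIntegrable_inv
    (fun x hx => by rw [uIcc_of_le hM] at hx; linarith [hx.1]) (by fun_prop)

lemma integral_inv_one_add {M : ℝ} (hM : 0 ≤ M) : ∫ x in 0..M, (1 + x)⁻¹ = log (1 + M) := by
  rw [intervalIntegral.integral_comp_add_left (fun x => x⁻¹),
    integral_inv_of_pos (by norm_num) (by linarith)]
  simp

lemma continuous_inv_one_add_abs_sub (t : ℝ) : Continuous fun x : ℝ => (1 + |x - t|)⁻¹ :=
  (continuous_const.add (continuous_id.sub continuous_const).abs).inv₀
    fun x => (by positivity : (0:ℝ) < 1 + |x - t|).ne'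

lemma integral_inv_one_add_abs_sub {t M : ℝ} (ht : 0 ≤ t) (htM : t ≤ M) :
    ∫ x in 0..M, (1 + |x - t|)⁻¹ = log (1 + t) + log (1 + M - t) := by
  have hcont := continuous_inv_one_add_abs_sub t
  rw [← intervalIntegral.integral_add_adjacent_intervals (hcont.intervalIntegrable 0 t)
    (hcont.intervalIntegrable t M)]
  have left : ∫ x in 0..t, (1 + |x - t|)⁻¹ = ∫ x in 0..t, ((1 + t) - x)⁻¹ := by
    refine intervalIntegral.integral_congr fun x hx => ?_
    rw [uIcc_of_le ht] at hx
    simp only [abs_of_nonpos (sub_nonpos.2 hx.2)]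
    ring_nf
  have right : ∫ x in t..M, (1 + |x - t|)⁻¹ = ∫ x in t..M, (x + (1 - t))⁻¹ := by
    refine intervalIntegral.integral_congr fun x hx => ?_
    rw [uIcc_of_le htM] at hx
    simp only [abs_of_nonneg (sub_nonneg.2 hx.1)]
    ring_nf
  rw [left, right, intervalIntegral.integral_comp_sub_left (fun x => x⁻¹),
    intervalIntegral.integral_comp_add_right (fun x => x⁻¹),
    integral_inv_of_pos (by linarith) (by linarith),
    integral_inv_of_pos (by linarith) (by linarith)]
  ring_nf

noncomputable def modelKernel (t x : ℝ) : ℝ := (1 + x)⁻¹ * (1 + |x - t|)⁻¹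

lemma modelKernel_le {t x : ℝ} (ht : 0 ≤ t) (hx : 0 ≤ x) :
    modelKernel t x ≤ ((1 + x)⁻¹ + (1 + |x - t|)⁻¹) / (2 + t) :=
  inv_mul_inv_le_inv_add_inv_div (by linarith) (by positivity) (by linarith)
    (by linarith [le_abs_self (t - x), abs_sub_comm x t])

lemma modelKernel_le_two_mul_rpow {t x : ℝ} (ht : 0 ≤ t) (hx : 1 + 2 * t < x) :
    modelKernel t x ≤ 2 * x ^ (-2 : ℝ) := by
  have hx0 : 0 < x := by linarith
  rw [modelKernel, abs_of_nonneg (by linarith), rpow_neg hx0.le, rpow_two, ← mul_inv,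
    show 2 * (x ^ 2)⁻¹ = (x ^ 2 / 2)⁻¹ by rw [inv_div, div_eq_mul_inv]]
  gcongr
  nlinarith

lemma measurable_modelKernel (t : ℝ) : Measurable (modelKernel t) := by
  unfold modelKernel
  fun_prop

lemma modelKernel_nonneg (t : ℝ) {x : ℝ} (hx : 0 ≤ x) : 0 ≤ modelKernel t x := by
  unfold modelKernel
  positivity

lemma intervalIntegrable_modelKernel (t : ℝ) {M : ℝ} (hM : 0 ≤ M) :
    IntervalIntegrable (modelKernel t) volume 0 M :=
  (intervalIntegrable_inv_one_add hM).mul_continuousOn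
    (continuous_inv_one_add_abs_sub t).continuousOn

lemma intervalIntegral_modelKernel_le {t M : ℝ} (ht : 0 ≤ t) (htM : t ≤ M) :
    ∫ x in 0..M, modelKernel t x ≤
      (log (1 + M) + (log (1 + t) + log (1 + M - t))) / (2 + t) := by
  have hM : 0 ≤ M := ht.trans htM
  have hint₁ := intervalIntegrable_inv_one_add hM
  have hint₂ := (continuous_inv_one_add_abs_sub t).intervalIntegrable (μ := volume) 0 M
  calc ∫ x in 0..M, modelKernel t x
      ≤ ∫ x in 0..M, ((1 + x)⁻¹ + (1 + |x - t|)⁻¹) / (2 + t) :=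
        intervalIntegral.integral_mono_on hM (intervalIntegrable_modelKernel t hM)
          ((hint₁.add hint₂).div_const _) fun x hx => modelKernel_le ht hx.1
    _ = _ := by
      rw [intervalIntegral.integral_div, intervalIntegral.integral_add hint₁ hint₂,
        integral_inv_one_add hM, integral_inv_one_add_abs_sub ht htM]

lemma integrableOn_modelKernel_Ioi {t : ℝ} (ht : 0 ≤ t) :
    IntegrableOn (modelKernel t) (Ioi (1 + 2 * t)) :=
  Integrable.mono'
    ((integrableOn_Ioi_rpow_of_lt (a := -2) (by norm_num) (by linarith)).const_mul 2)
    (measurable_modelKernel t).aestronglyMeasurable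
    (ae_restrict_of_forall_mem measurableSet_Ioi fun x (hx : 1 + 2 * t < x) => by
      rw [norm_of_nonneg (modelKernel_nonneg t (by linarith))]
      exact modelKernel_le_two_mul_rpow ht hx)

lemma setIntegral_modelKernel_Ioi_le {t : ℝ} (ht : 0 ≤ t) :
    ∫ x in Ioi (1 + 2 * t), modelKernel t x ≤ 2 / (1 + 2 * t) := by
  have hM : 0 < 1 + 2 * t := by linarith
  calc ∫ x in Ioi (1 + 2 * t), modelKernel t x
      ≤ ∫ x in Ioi (1 + 2 * t), 2 * x ^ (-2 : ℝ) :=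
        setIntegral_mono_on (integrableOn_modelKernel_Ioi ht)
          ((integrableOn_Ioi_rpow_of_lt (by norm_num) hM).const_mul 2) measurableSet_Ioi
          fun _ hx => modelKernel_le_two_mul_rpow ht hx
    _ = 2 / (1 + 2 * t) := by
      rw [integral_const_mul, integral_Ioi_rpow_of_lt (by norm_num) hM,
        show (-2 : ℝ) + 1 = -1 by norm_num, rpow_neg_one]
      ring

lemma integrableOn_modelKernel {t : ℝ} (ht : 0 ≤ t) : IntegrableOn (modelKernel t) (Ioi 0) := by
  rw [← Ioc_union_Ioi_eq_Ioi (by linarith : (0 : ℝ) ≤ 1 + 2 * t)]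
  exact ((intervalIntegrable_iff_integrableOn_Ioc_of_le (by linarith)).1
    (intervalIntegrable_modelKernel t (by linarith))).union (integrableOn_modelKernel_Ioi ht)

lemma integral_modelKernel_le {t : ℝ} (ht : 0 ≤ t) :
    ∫ x in Ioi 0, modelKernel t x ≤ 12 * (log (2 + t) / (2 + t)) := by
  have h2t : 0 < 2 + t := by linarith
  have hlog_two : 1 / 2 < log 2 := by linarith [log_two_gt_d9]
  have hlog_two_le : log 2 ≤ log (2 + t) := log_le_log (by norm_num) (by linarith)
  have hlog_one_add_le : log (1 + t) ≤ log (2 + t) := log_le_log (by linarith) (by linarith)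
  have hlog_M : log (1 + (1 + 2 * t)) = log 2 + log (1 + t) := by
    rw [← log_mul (by norm_num) (by linarith)]; ring_nf
  have hbulk := intervalIntegral_modelKernel_le ht (by linarith : t ≤ 1 + 2 * t)
  rw [hlog_M, show 1 + (1 + 2 * t) - t = 2 + t by ring] at hbulk
  have htail : 2 / (1 + 2 * t) ≤ 8 * log (2 + t) / (2 + t) := by
    rw [div_le_div_iff₀ (by linarith) h2t]
    nlinarith
  rw [← intervalIntegral.integral_interval_add_Ioi'
    (intervalIntegrable_modelKernel t (by linarith)) (integrableOn_modelKernel_Ioi ht)]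
  calc _ ≤ (log 2 + log (1 + t) + (log (1 + t) + log (2 + t))) / (2 + t)
        + 8 * log (2 + t) / (2 + t) :=
        add_le_add hbulk ((setIntegral_modelKernel_Ioi_le ht).trans htail)
    _ ≤ 4 * log (2 + t) / (2 + t) + 8 * log (2 + t) / (2 + t) := by gcongr; linarith
    _ = 12 * (log (2 + t) / (2 + t)) := by ring

theorem integral_abs_div_sqrt_le {α : Type*} [MeasurableSpace α] {μ : Measure α}
    {f v w : α → ℝ} (hf : AEStronglyMeasurable f μ) (hv : AEStronglyMeasurable v μ)
    (hw : AEStronglyMeasurable w μ) (hv0 : ∀ᵐ x ∂μ, 0 < v x) (hw0 : ∀ᵐ x ∂μ, 0 < w x)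
    (hfw : Integrable (fun x => f x ^ 2 * w x) μ) (hvw : Integrable (fun x => (v x * w x)⁻¹) μ) :
    ∫ x, |f x| / √(v x) ∂μ ≤
      (∫ x, f x ^ 2 * w x ∂μ) ^ (1 / 2 : ℝ) * (∫ x, (v x * w x)⁻¹ ∂μ) ^ (1 / 2 : ℝ) := by
  set F := fun x => |f x| * √(w x)
  set G := fun x => (√(v x * w x))⁻¹
  have hFm : AEStronglyMeasurable F μ := hf.norm.mul hw.aemeasurable.sqrt.aestronglyMeasurable
  have hGm : AEStronglyMeasurable G μ :=
    (hv.aemeasurable.mul hw.aemeasurable).sqrt.inv.aestronglyMeasurable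
  have hF2 : (fun x => F x ^ 2) =ᵐ[μ] fun x => f x ^ 2 * w x := by
    filter_upwards [hw0] with x hw
    simp only [F, mul_pow, sq_abs, sq_sqrt hw.le]
  have hG2 : (fun x => G x ^ 2) =ᵐ[μ] fun x => (v x * w x)⁻¹ := by
    filter_upwards [hv0, hw0] with x hv hw
    simp only [G, inv_pow, sq_sqrt (mul_pos hv hw).le]
  have hFG : (fun x => F x * G x) =ᵐ[μ] fun x => |f x| / √(v x) := by
    filter_upwards [hv0, hw0] with x hv hw
    have : √(w x) ≠ 0 := (sqrt_pos.2 hw).ne'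
    simp only [F, G, sqrt_mul hv.le]
    field_simp
  have holder := integral_mul_le_Lp_mul_Lq_of_nonneg HolderConjugate.two_two
    (Filter.Eventually.of_forall fun x => mul_nonneg (abs_nonneg _) (sqrt_nonneg _))
    (Filter.Eventually.of_forall fun x => inv_nonneg.2 (sqrt_nonneg _))
    (by rw [ENNReal.ofReal_ofNat, memLp_two_iff_integrable_sq hFm]; exact hfw.congr hF2.symm)
    (by rw [ENNReal.ofReal_ofNat, memLp_two_iff_integrable_sq hGm]; exact hvw.congr hG2.symm)
  simp only [rpow_two] at holder
  rwa [integral_congr_ae hFG, integral_congr_ae hF2, integral_congr_ae hG2] at holder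

lemma inv_one_add_norm_sub_mul_rpow_le {r : ℝ} (hr : 1 ≤ r) (z : ℂ) {x : ℝ} (hx : 0 ≤ x) :
    ((1 + ‖(x : ℂ) - z‖) * (1 + x) ^ r)⁻¹ ≤ modelKernel ‖z‖ x := by
  have hdist : |x - ‖z‖| ≤ ‖(x : ℂ) - z‖ := by
    simpa [Complex.norm_real, abs_of_nonneg hx] using abs_norm_sub_norm_le (x : ℂ) z
  rw [modelKernel, mul_inv, mul_comm]
  gcongr
  exact self_le_rpow_of_one_le (by linarith) hr

lemma integrableOn_inv_one_add_norm_sub_mul_rpow {r : ℝ} (hr : 1 ≤ r) (z : ℂ) :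
    IntegrableOn (fun x : ℝ => ((1 + ‖(x : ℂ) - z‖) * (1 + x) ^ r)⁻¹) (Ioi 0) :=
  (integrableOn_modelKernel (norm_nonneg z)).mono'
    (Measurable.aestronglyMeasurable (by fun_prop))
    (ae_restrict_of_forall_mem measurableSet_Ioi fun x (hx : 0 < x) => by
      rw [norm_of_nonneg (by positivity)]
      exact inv_one_add_norm_sub_mul_rpow_le hr z hx.le)

lemma integral_inv_one_add_norm_sub_mul_rpow_le {r : ℝ} (hr : 1 ≤ r) (z : ℂ) :
    ∫ x in Ioi (0 : ℝ), ((1 + ‖(x : ℂ) - z‖) * (1 + x) ^ r)⁻¹ ≤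
      12 * (log (2 + ‖z‖) / (2 + ‖z‖)) :=
  (setIntegral_mono_on (integrableOn_inv_one_add_norm_sub_mul_rpow hr z)
    (integrableOn_modelKernel (norm_nonneg z)) measurableSet_Ioi
    fun _ hx => inv_one_add_norm_sub_mul_rpow_le hr z (le_of_lt hx)).trans
    (integral_modelKernel_le (norm_nonneg z))

theorem omega_bound_r_between_one_two_general (r : ℝ) (hr1 : 1 < r) :
    ∃ C > 0, ∀ (q : ℝ → ℝ) (z : ℂ),
      AEStronglyMeasurable q (volume.restrict (Ioi (0:ℝ))) →
      IntegrableOn (fun x => q x ^ 2 * (1 + x) ^ r) (Ioi 0) →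
      ∫ x in Ioi (0:ℝ), |q x| / Real.sqrt (1 + ‖(x:ℂ) - z‖) ≤
        C * (∫ x in Ioi (0:ℝ), q x ^ 2 * (1 + x) ^ r) ^ ((1:ℝ)/2) *
          (Real.log (2 + ‖z‖) / (2 + ‖z‖)) ^ ((1:ℝ)/2) := by
  refine ⟨4, by norm_num, fun q z hq hqw => ?_⟩
  set L := log (2 + ‖z‖) / (2 + ‖z‖)
  have hL : 0 ≤ L := div_nonneg (log_nonneg (by linarith [norm_nonneg z])) (by positivity)
  have hweight : ∀ᵐ x ∂volume.restrict (Ioi (0:ℝ)), 0 < (1 + x) ^ r :=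
    ae_restrict_of_forall_mem measurableSet_Ioi fun x (hx : 0 < x) => by positivity
  have hkernel_nonneg : 0 ≤ ∫ x in Ioi (0:ℝ), ((1 + ‖(x : ℂ) - z‖) * (1 + x) ^ r)⁻¹ :=
    setIntegral_nonneg measurableSet_Ioi fun x (hx : 0 < x) => by positivity
  have hkernel := integral_inv_one_add_norm_sub_mul_rpow_le hr1.le z
  have h16 : (16 : ℝ) ^ (1 / 2 : ℝ) = 4 := by
    rw [← sqrt_eq_rpow, show (16 : ℝ) = 4 ^ 2 by norm_num, sqrt_sq (by norm_num)]
  calc ∫ x in Ioi (0:ℝ), |q x| / √(1 + ‖(x:ℂ) - z‖)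
      ≤ (∫ x in Ioi (0:ℝ), q x ^ 2 * (1 + x) ^ r) ^ (1 / 2 : ℝ) *
          (∫ x in Ioi (0:ℝ), ((1 + ‖(x : ℂ) - z‖) * (1 + x) ^ r)⁻¹) ^ (1 / 2 : ℝ) :=
        integral_abs_div_sqrt_le hq (Measurable.aestronglyMeasurable (by fun_prop))
          (Measurable.aestronglyMeasurable (by fun_prop))
          (Filter.Eventually.of_forall fun x => by positivity) hweight hqw
          (integrableOn_inv_one_add_norm_sub_mul_rpow hr1.le z)
    _ ≤ (∫ x in Ioi (0:ℝ), q x ^ 2 * (1 + x) ^ r) ^ (1 / 2 : ℝ) * (16 * L) ^ (1 / 2 : ℝ) := by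
        gcongr
        · exact rpow_nonneg (setIntegral_nonneg measurableSet_Ioi
            fun x (hx : 0 < x) => by positivity) _
        · linarith
    _ = 4 * (∫ x in Ioi (0:ℝ), q x ^ 2 * (1 + x) ^ r) ^ (1 / 2 : ℝ) * L ^ (1 / 2 : ℝ) := by
        rw [mul_rpow (by norm_num) hL, h16]; ring

theorem omega_bound_r_between_one_two (r : ℝ) (hr1 : 1 < r) (hr2 : r < 2) :
    ∃ C > 0, ∀ (q : ℝ → ℝ) (z : ℂ),
      AEStronglyMeasurable q (volume.restrict (Ioi (0:ℝ))) →
      IntegrableOn (fun x => q x ^ 2 * (1 + x) ^ r) (Ioi 0) →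
      ∫ x in Ioi (0:ℝ), |q x| / Real.sqrt (1 + ‖(x:ℂ) - z‖) ≤
        C * (∫ x in Ioi (0:ℝ), q x ^ 2 * (1 + x) ^ r) ^ ((1:ℝ)/2) *
          (Real.log (2 + ‖z‖) / (2 + ‖z‖)) ^ ((1:ℝ)/2) :=
  omega_bound_r_between_one_two_general r hr1
end

section
/- Let z ∈ ℂ with Im z ≠ 0, and define g_A(w) = exp(-(2/3) Re(w^{3/2})) using the principal branch of the square root (branch cut along the negative real axis). Then the map x ↦ g_A(x - z) is strictly decreasing on ℝ₊ and tends to 0 as x → ∞. -/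
/-!
With `f x = Re ((x - z) ^ (3/2))` we have `gA (x - z) = exp (-(2/3) f x)`. Since `Im z ≠ 0`, the
path `x - z` stays in the slit plane, where `f' x = (3/2) Re ((x - z) ^ (1/2)) > 0`; and
`f x = ‖x - z‖ ^ (3/2) cos ((3/2) arg (x - z)) → ∞` because `arg (x - z) → 0`.
-/

open Set Filter

/-- `g_A(w) = exp(-(2/3) Re(w^{3/2}))`, with the principal branch of the power. -/
noncomputable def gA (w : ℂ) : ℝ :=
  Real.exp (-(2/3) * (w ^ ((3:ℂ)/2)).re)

open Topology Complex

/-- On the slit plane `|arg w| < π`, so `|s arg w| < π/2` for `0 ≤ s ≤ 1/2`. -/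
lemma re_cpow_pos_of_mem_slitPlane {w : ℂ} (hw : w ∈ slitPlane) {s : ℝ} (hs₀ : 0 ≤ s)
    (hs : s ≤ 1 / 2) : 0 < (w ^ (s : ℂ)).re := by
  have hw₀ : w ≠ 0 := slitPlane_ne_zero hw
  have harg_lt : arg w < Real.pi := lt_of_le_of_ne (arg_le_pi w) (slitPlane_arg_ne_pi hw)
  have harg_gt : -Real.pi < arg w := neg_pi_lt_arg w
  have hcos : 0 < Real.cos (arg w * s) := by
    apply Real.cos_pos_of_mem_Ioo
    constructor <;> nlinarith [Real.pi_pos]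
  rw [cpow_ofReal_re]
  exact mul_pos (Real.rpow_pos_of_pos (norm_pos_iff.2 hw₀) s) hcos

lemma ofReal_sub_mem_slitPlane {z : ℂ} (hz : z.im ≠ 0) (x : ℝ) :
    (x : ℂ) - z ∈ slitPlane :=
  mem_slitPlane_iff.2 (Or.inr (by simpa using hz))

lemma strictMono_re_ofReal_sub_cpow {z : ℂ} (hz : z.im ≠ 0) {c : ℝ} (hc₁ : 1 ≤ c)
    (hc : c ≤ 3 / 2) : StrictMono fun x : ℝ => (((x : ℂ) - z) ^ (c : ℂ)).re := by
  have hderiv (x : ℝ) : HasDerivAt (fun x : ℝ => (((x : ℂ) - z) ^ (c : ℂ)).re)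
      (c * (((x : ℂ) - z) ^ ((c - 1 : ℝ) : ℂ)).re) x := by
    have h := (((hasDerivAt_id (x : ℂ)).sub_const z).cpow_const (c := c)
      (ofReal_sub_mem_slitPlane hz x)).real_of_complex
    simpa [mul_comm] using h
  refine strictMono_of_deriv_pos fun x => ?_
  rw [(hderiv x).deriv]
  exact mul_pos (by linarith)
    (re_cpow_pos_of_mem_slitPlane (ofReal_sub_mem_slitPlane hz x) (by linarith) (by linarith))

lemma tendsto_arg_ofReal_sub_atTop (z : ℂ) :
    Tendsto (fun x : ℝ => arg ((x : ℂ) - z)) atTop (𝓝 0) := by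
  have hinv : Tendsto (fun x : ℝ => ((x : ℂ))⁻¹) atTop (𝓝 0) := by
    simpa [Function.comp_def] using (continuous_ofReal.tendsto 0).comp tendsto_inv_atTop_zero
  have hlim : Tendsto (fun x : ℝ => 1 - z * (x : ℂ)⁻¹) atTop (𝓝 1) := by
    simpa using tendsto_const_nhds.sub (tendsto_const_nhds.mul hinv)
  have harg := (continuousAt_arg one_mem_slitPlane).tendsto.comp hlim
  rw [arg_one] at harg
  refine harg.congr' ?_
  filter_upwards [eventually_gt_atTop 0] with x hx
  have hfactor : (x : ℂ) - z = x * (1 - z * (x : ℂ)⁻¹) := by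
    field_simp [ofReal_ne_zero.2 hx.ne']
  rw [Function.comp_apply, hfactor, arg_real_mul _ hx]

lemma tendsto_norm_ofReal_sub_atTop (z : ℂ) :
    Tendsto (fun x : ℝ => ‖(x : ℂ) - z‖) atTop atTop :=
  tendsto_atTop_mono (fun x => by simpa using re_le_norm ((x : ℂ) - z))
    (tendsto_atTop_add_const_right _ (-z.re) tendsto_id)

lemma tendsto_re_ofReal_sub_cpow_atTop (z : ℂ) {c : ℝ} (hc : 0 < c) :
    Tendsto (fun x : ℝ => (((x : ℂ) - z) ^ (c : ℂ)).re) atTop atTop := by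
  simp only [cpow_ofReal_re]
  have hcos : Tendsto (fun x : ℝ => Real.cos (arg ((x : ℂ) - z) * c)) atTop (𝓝 1) := by
    simpa [Function.comp_def] using
      (Real.continuous_cos.tendsto _).comp ((tendsto_arg_ofReal_sub_atTop z).mul_const c)
  exact ((tendsto_rpow_atTop hc).comp (tendsto_norm_ofReal_sub_atTop z)).atTop_mul_pos one_pos hcos

theorem gA_strictAnti_of_im_ne_zero (z : ℂ) (hz : z.im ≠ 0) :
    StrictAntiOn (fun x : ℝ => gA ((x:ℂ) - z)) (Ici 0) ∧
    Tendsto (fun x : ℝ => gA ((x:ℂ) - z)) atTop (nhds 0) := by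
  set f : ℝ → ℝ := fun x => (((x : ℂ) - z) ^ ((3 / 2 : ℝ) : ℂ)).re
  have hgA : (fun x : ℝ => gA ((x : ℂ) - z)) = fun x => Real.exp (-(2 / 3) * f x) := by
    ext x
    simp only [gA, f]
    norm_num
  have hf_mono : StrictMono f := strictMono_re_ofReal_sub_cpow hz (by norm_num) le_rfl
  have hf_top : Tendsto f atTop atTop := tendsto_re_ofReal_sub_cpow_atTop z (by norm_num)
  rw [hgA]
  refine ⟨fun a _ b _ hab => Real.exp_lt_exp.2 (by linarith [hf_mono hab]), ?_⟩
  exact Real.tendsto_exp_atBot.comp (hf_top.const_mul_atTop_of_neg (by norm_num))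
end

section
/- If |w − nπ| ≥ π/4 for every integer n, then e^{|Im w|} < 4|sin w|. -/
/-!
Write `w = x + iy`, so that `‖sin w‖² = sin² x + sinh² y`. If `e^{2|y|} > 2`, then already
`4 sinh |y| = 2e^{|y|} - 2e^{-|y|} > e^{|y|}`. Otherwise `|y| ≤ 1/2`, so the hypothesis puts `x` at
distance at least `√(π²/16 - 1/4)` from the nearest multiple of `π`, and Jordan's inequality gives
`sin² x > 1/8`, i.e. `16 sin² x > 2 ≥ e^{2|y|}`.
-/

open scoped Real

namespace Real

theorem exp_lt_four_mul_sinh {t : ℝ} (h : 2 < exp t ^ 2) : exp t < 4 * sinh t := by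
  have hpos := exp_pos t
  have hinv : exp (-t) * exp t = 1 := by rw [← exp_add, neg_add_cancel, exp_zero]
  rw [sinh_eq]
  nlinarith

theorem mul_abs_sub_round_mul_pi_le_abs_sin (x : ℝ) :
    2 / π * |x - round (x / π) * π| ≤ |sin x| := by
  set n := round (x / π)
  have hdist : |x - n * π| ≤ π / 2 := by
    have hx : x - n * π = (x / π - n) * π := by field_simp
    rw [hx, abs_mul, abs_of_pos pi_pos]
    linarith [mul_le_mul_of_nonneg_right (abs_sub_round (x / π)) pi_pos.le]
  calc 2 / π * |x - n * π| ≤ |sin (x - n * π)| := mul_abs_le_abs_sin hdist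
    _ = |sin x| := by
      rw [sin_sub_int_mul_pi, abs_mul, abs_zpow, abs_neg, abs_one, one_zpow, one_mul]

end Real

namespace Complex

theorem norm_sin_sq (z : ℂ) : ‖sin z‖ ^ 2 = Real.sin z.re ^ 2 + Real.sinh z.im ^ 2 := by
  rw [sin_eq, ← ofReal_sin, ← ofReal_cos, ← ofReal_cosh, ← ofReal_sinh, ← ofReal_mul,
    ← ofReal_mul, Complex.sq_norm, normSq_add_mul_I]
  linear_combination Real.sin z.re ^ 2 * Real.cosh_sq z.im +
    Real.sinh z.im ^ 2 * Real.sin_sq_add_cos_sq z.re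

theorem abs_sin_re_le_norm_sin (z : ℂ) : |Real.sin z.re| ≤ ‖sin z‖ :=
  abs_le_of_sq_le_sq (by nlinarith [norm_sin_sq z]) (norm_nonneg _)

theorem sinh_abs_im_le_norm_sin (z : ℂ) : Real.sinh |z.im| ≤ ‖sin z‖ := by
  rw [← Real.abs_sinh]
  exact abs_le_of_sq_le_sq (by nlinarith [norm_sin_sq z]) (norm_nonneg _)

theorem one_div_eight_lt_sin_re_sq {w : ℂ} (h : π / 4 ≤ ‖w - round (w.re / π) * π‖)
    (him : |w.im| ≤ 1 / 2) : 1 / 8 < Real.sin w.re ^ 2 := by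
  set d := w.re - round (w.re / π) * π
  have hnorm : ‖w - round (w.re / π) * π‖ ^ 2 = d ^ 2 + w.im ^ 2 := by
    rw [Complex.sq_norm, normSq_apply]; simp [d, sq]
  have hfar : π ^ 2 / 16 - 1 / 4 ≤ d ^ 2 := by
    nlinarith [sq_abs w.im, abs_nonneg w.im, Real.pi_pos]
  have hjordan : 4 / π ^ 2 * d ^ 2 ≤ Real.sin w.re ^ 2 := by
    have hd := Real.mul_abs_sub_round_mul_pi_le_abs_sin w.re
    calc 4 / π ^ 2 * d ^ 2 = (2 / π * |d|) ^ 2 := by rw [mul_pow, sq_abs]; ring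
      _ ≤ |Real.sin w.re| ^ 2 := by gcongr
      _ = Real.sin w.re ^ 2 := sq_abs _
  have hpi : 1 / π ^ 2 < 1 / 8 := by gcongr; nlinarith [Real.pi_gt_three]
  calc 1 / 8 < 1 / 4 - 1 / π ^ 2 := by linarith
    _ = 4 / π ^ 2 * (π ^ 2 / 16 - 1 / 4) := by field_simp; ring
    _ ≤ 4 / π ^ 2 * d ^ 2 := by gcongr
    _ ≤ Real.sin w.re ^ 2 := hjordan

end Complex

theorem exp_abs_im_lt_four_abs_sin (w : ℂ)
    (h : ∀ n : ℤ, π / 4 ≤ ‖w - n * π‖) :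
    Real.exp |w.im| < 4 * ‖Complex.sin w‖ := by
  rcases lt_or_ge 2 (Real.exp |w.im| ^ 2) with hlarge | hsmall
  · calc Real.exp |w.im| < 4 * Real.sinh |w.im| := Real.exp_lt_four_mul_sinh hlarge
      _ ≤ 4 * ‖Complex.sin w‖ := by gcongr; exact Complex.sinh_abs_im_le_norm_sin w
  · have him : |w.im| ≤ 1 / 2 := by
      rw [sq, ← Real.exp_add] at hsmall
      linarith [Real.add_one_le_exp (|w.im| + |w.im|)]
    have hsin := Complex.one_div_eight_lt_sin_re_sq (h _) him
    have hsq : Real.exp |w.im| ^ 2 < (4 * |Real.sin w.re|) ^ 2 := by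
      rw [mul_pow, sq_abs]; linarith
    calc Real.exp |w.im| < 4 * |Real.sin w.re| := lt_of_pow_lt_pow_left₀ 2 (by positivity) hsq
      _ ≤ 4 * ‖Complex.sin w‖ := by gcongr; exact Complex.abs_sin_re_le_norm_sin w
end
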